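/- Structural decomposition for the unlimited-budget algorithm: Let G = (V, E, w) be an influence graph, E_det := { e ∈ E : w(e) = 1 } its set of deterministic arcs, and V_p := { v ∈ V : v is the tail of some arc e with w(e) < 1 } the set of nodes with an outgoing probabilistic arc. Let X ⊆ V be deterministically closed, i.e., reach_{E_det}(X) = X. Set X_o := reach_{E_det}(X ∩ V_p) and X' := X ∖ X_o. Then p(v|X) = 1 for every v ∈ X', and p(v|X) = p(v|X_o) for every v ∈ V ∖ X'. -/

import Mathlib

/-!
For every live-arc set `T`, a path from `X` either stays in `X` or leaves it for the first time
along an arc that cannot be deterministic (as `X` is deterministically closed), so its tail lies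
in `X ∩ V_p ⊆ X_o`. Hence, away from `X'`, a node is reachable from `X` iff it is reachable from
`X_o`, while every node of `X` is reached for every `T`, so its activation probability is the
total mass `∑_T P(T) = ∏_e (w e + (1 - w e)) = 1`.
-/

/-- The set of nodes reachable from some node of `X` by a directed path
using only arcs of `S`. -/
def reach {V : Type*} (S : Set (V × V)) (X : Set V) : Set V :=
  {v | ∃ x ∈ X, Relation.ReflTransGen (fun a b : V => (a, b) ∈ S) x v}

/-- The live-arc probability of the arc subset `S ⊆ E`:
`P(S) = (∏_{e ∈ S} w(e)) · (∏_{e ∈ E∖S} (1 − w(e)))`. -/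
def liveP {V : Type*} [DecidableEq V] (w : V × V → ℚ) (E S : Finset (V × V)) : ℚ :=
  (∏ e ∈ S, w e) * ∏ e ∈ E \ S, (1 - w e)

open Classical in
/-- The activation probability `p(v|X)` of node `v` for effector set `X`. -/
noncomputable def actProb {V : Type*} [Fintype V] [DecidableEq V]
    (w : V × V → ℚ) (E : Finset (V × V)) (X : Set V) (v : V) : ℚ :=
  ∑ S ∈ E.powerset.filter (fun T : Finset (V × V) => v ∈ reach (↑T : Set (V × V)) X),
    liveP w E S

section Reach

variable {V : Type*} (S : Set (V × V))

theorem subset_reach (X : Set V) : X ⊆ reach S X :=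
  fun x hx => ⟨x, hx, .refl⟩

theorem reach_mono {X Y : Set V} (h : X ⊆ Y) : reach S X ⊆ reach S Y :=
  fun _ ⟨x, hx, hp⟩ => ⟨x, h hx, hp⟩

theorem reach_subset_union_reach {X Y : Set V}
    (hexit : ∀ a b, (a, b) ∈ S → a ∈ X → b ∉ X → a ∈ Y) :
    reach S X ⊆ X ∪ reach S Y := by
  rintro v ⟨x, hx, hp⟩
  induction hp with
  | refl => exact .inl hx
  | @tail b c _ hbc ih =>
    rcases ih with hb | ⟨y, hy, hyb⟩
    · by_cases hc : c ∈ X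
      · exact .inl hc
      · exact .inr ⟨b, hexit b c hbc hb hc, .single hbc⟩
    · exact .inr ⟨y, hy, hyb.tail hbc⟩

end Reach

section ActProb

theorem sum_powerset_liveP {V : Type*} [DecidableEq V] (w : V × V → ℚ) (E : Finset (V × V)) :
    ∑ S ∈ E.powerset, liveP w E S = 1 := by
  simp only [liveP, ← Finset.prod_add, add_sub_cancel, Finset.prod_const_one]

variable {V : Type*} [Fintype V] [DecidableEq V] (w : V × V → ℚ) (E : Finset (V × V))

theorem actProb_eq_one_of_mem {X : Set V} {v : V} (hv : v ∈ X) : actProb w E X v = 1 := by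
  classical
  unfold actProb
  rw [Finset.filter_true_of_mem fun S _ => subset_reach _ X hv]
  exact sum_powerset_liveP w E

theorem actProb_congr {X Y : Set V} {v : V}
    (h : ∀ T ⊆ E, v ∈ reach (↑T : Set (V × V)) X ↔ v ∈ reach (↑T : Set (V × V)) Y) :
    actProb w E X v = actProb w E Y v := by
  classical
  unfold actProb
  exact Finset.sum_congr (Finset.filter_congr fun T hT => h T (Finset.mem_powerset.1 hT))
    fun _ _ => rfl

end ActProb

/-- Structural decomposition for the unlimited-budget algorithm.
For a deterministically closed effector set `X`, with `X_o` the deterministic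
closure of the effectors having an outgoing probabilistic arc and `X' = X ∖ X_o`,
every node of `X'` has activation probability 1 and every other node has the same
activation probability under `X` as under `X_o`. -/
theorem unlimited_budget_decomposition {V : Type*} [Fintype V] [DecidableEq V]
    (E : Finset (V × V)) (w : V × V → ℚ)
    (hw : ∀ e ∈ E, 0 < w e ∧ w e ≤ 1)
    (X : Set V)
    (hclosed : reach (↑(E.filter (fun e => w e = 1)) : Set (V × V)) X = X) :
    (∀ v ∈ X \ reach (↑(E.filter (fun e => w e = 1)) : Set (V × V))
        (X ∩ {v : V | ∃ u : V, (v, u) ∈ E ∧ w (v, u) < 1}),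
      actProb w E X v = 1) ∧
    (∀ v : V, v ∉ X \ reach (↑(E.filter (fun e => w e = 1)) : Set (V × V))
        (X ∩ {v : V | ∃ u : V, (v, u) ∈ E ∧ w (v, u) < 1}) →
      actProb w E X v =
        actProb w E (reach (↑(E.filter (fun e => w e = 1)) : Set (V × V))
          (X ∩ {v : V | ∃ u : V, (v, u) ∈ E ∧ w (v, u) < 1})) v) := by
  set D : Set (V × V) := ↑(E.filter (fun e => w e = 1))
  set Xp : Set V := X ∩ {v : V | ∃ u : V, (v, u) ∈ E ∧ w (v, u) < 1}
  have hXo : reach D Xp ⊆ X := hclosed ▸ reach_mono D Set.inter_subset_left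
  have hexit (T : Finset (V × V)) (hT : T ⊆ E) (a b : V) (hab : (a, b) ∈ (↑T : Set (V × V)))
      (ha : a ∈ X) (hb : b ∉ X) : a ∈ Xp := by
    have hw1 : w (a, b) ≠ 1 := fun h =>
      hb (hclosed ▸ ⟨a, ha, .single (by simp [D, hT hab, h])⟩)
    exact ⟨ha, b, hT hab, (hw _ (hT hab)).2.lt_of_ne hw1⟩
  refine ⟨fun v hv => actProb_eq_one_of_mem w E hv.1, fun v hv => actProb_congr w E
    fun T hT => ⟨fun hvT => ?_, fun h => reach_mono _ hXo h⟩⟩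
  rcases reach_subset_union_reach _ (hexit T hT) hvT with hvX | hvXp
  · exact subset_reach _ _ (not_not.1 fun hvXo => hv ⟨hvX, hvXo⟩)
  · exact reach_mono _ (subset_reach D Xp) hvXp
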